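/- Let C ⊆ (ZMod (p^s))^n be a free submodule of rank K generated by (I_K | A), and suppose some row i of A has exactly m entries divisible by p. Then the socle C ∩ p^{s-1}(ZMod (p^s))^n contains a nonzero codeword of Lee weight at most p^{s-1} + (n - K - m)·⌊p/2⌋·p^{s-1}, hence d_L(C) ≤ p^{s-1} + (n - K - m)·⌊p/2⌋·p^{s-1}. -/

import Mathlib

open scoped Classical

/-- Lee weight of an element of `ZMod m`. -/
def leeWt (m : ℕ) (x : ZMod m) : ℕ := min x.val (m - x.val)

/-- Lee weight of a vector over `ZMod m` indexed by a finite type. -/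
def leeWtF (m : ℕ) {ι : Type} [Fintype ι] (x : ι → ZMod m) : ℕ := ∑ i, leeWt m (x i)

/-- The free code with generator matrix `(I_K | A)`: the set of words
`(u | u·A)` for messages `u`. -/
def freeCode (p s K t : ℕ) (A : Matrix (Fin K) (Fin t) (ZMod (p ^ s))) :
    Set ((Fin K ⊕ Fin t) → ZMod (p ^ s)) :=
  {c | ∃ u : Fin K → ZMod (p ^ s), c = Sum.elim u (fun j => ∑ i, u i * A i j)}

/-!
The witness is `p^(s-1)` times the `i`-th row `(e_i | A i)` of the generator matrix, which lies in
the socle. Its identity part has Lee weight `p^(s-1)`. In the redundancy part, `p^(s-1) a` vanishes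
when `p ∣ a`; otherwise its Lee weight is `p^(s-1)` times a Lee weight in `ZMod p`, so at most
`⌊p/2⌋ p^(s-1)`.
-/

open Finset

lemma leeWt_zero (m : ℕ) : leeWt m 0 = 0 := by
  simp [leeWt]

lemma leeWt_le_half (m : ℕ) (x : ZMod m) : leeWt m x ≤ m / 2 := by
  unfold leeWt
  omega

lemma leeWtF_sum_elim (m : ℕ) {ι κ : Type} [Fintype ι] [Fintype κ] (u : ι → ZMod m)
    (v : κ → ZMod m) : leeWtF m (Sum.elim u v) = leeWtF m u + leeWtF m v :=
  Fintype.sum_sum_type _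

lemma leeWtF_single (m : ℕ) {ι : Type} [Fintype ι] [DecidableEq ι] (i : ι) (x : ZMod m) :
    leeWtF m (Pi.single i x) = leeWt m x := by
  rw [leeWtF, Finset.sum_eq_single i (fun j _ hj => by rw [Pi.single_eq_of_ne hj, leeWt_zero])
    (by simp), Pi.single_eq_same]

section Socle

variable {p s : ℕ}

lemma val_pow_pred (hp : 1 < p) (hs : 0 < s) :
    ((p : ZMod (p ^ s)) ^ (s - 1)).val = p ^ (s - 1) := by
  rw [← Nat.cast_pow, ZMod.val_natCast_of_lt (Nat.pow_lt_pow_right hp (by omega))]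

lemma pow_pred_ne_zero (hp : 1 < p) (hs : 0 < s) : (p : ZMod (p ^ s)) ^ (s - 1) ≠ 0 := by
  rw [← ZMod.val_ne_zero, val_pow_pred hp hs]
  positivity

lemma pow_pred_mul_self_eq_zero (hs : 0 < s) : (p : ZMod (p ^ s)) ^ (s - 1) * p = 0 := by
  rw [← pow_succ, Nat.sub_add_cancel hs, ← Nat.cast_pow, ZMod.natCast_self]

lemma leeWt_pow_pred (hp : 1 < p) (hs : 0 < s) :
    leeWt (p ^ s) ((p : ZMod (p ^ s)) ^ (s - 1)) = p ^ (s - 1) := by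
  have hps : p ^ s = p * p ^ (s - 1) := by rw [← pow_succ', Nat.sub_add_cancel hs]
  rw [leeWt, val_pow_pred hp hs, hps]
  exact min_eq_left (by rw [← Nat.sub_one_mul]; exact Nat.le_mul_of_pos_left _ (by omega))

lemma leeWt_pow_pred_mul (hp : 1 < p) (hs : 0 < s) (y : ZMod (p ^ s)) :
    leeWt (p ^ s) ((p : ZMod (p ^ s)) ^ (s - 1) * y) = p ^ (s - 1) * leeWt p (y.val : ZMod p) := by
  have : NeZero (p ^ s) := ⟨by positivity⟩
  have hps : p ^ s = p ^ (s - 1) * p := by rw [← pow_succ, Nat.sub_add_cancel hs]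
  rw [leeWt, leeWt, ZMod.val_mul, val_pow_pred hp hs, ZMod.val_natCast]
  generalize y.val = k
  rw [hps, Nat.mul_mod_mul_left, ← Nat.mul_sub, Nat.mul_min_mul_left]

lemma sum_leeWt_pow_pred_mul_le {ι : Type} [Fintype ι] (hp : 1 < p) (hs : 0 < s)
    (a : ι → ZMod (p ^ s)) :
    ∑ j, leeWt (p ^ s) ((p : ZMod (p ^ s)) ^ (s - 1) * a j) ≤
      #{j | ¬ (p : ZMod (p ^ s)) ∣ a j} * (p / 2) * p ^ (s - 1) := by
  calc ∑ j, leeWt (p ^ s) ((p : ZMod (p ^ s)) ^ (s - 1) * a j)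
      ≤ ∑ j, if (p : ZMod (p ^ s)) ∣ a j then 0 else (p / 2) * p ^ (s - 1) := by
        refine Finset.sum_le_sum fun j _ => ?_
        split_ifs with h
        · obtain ⟨z, hz⟩ := h
          rw [hz, ← mul_assoc, pow_pred_mul_self_eq_zero hs, zero_mul, leeWt_zero]
        · rw [leeWt_pow_pred_mul hp hs, mul_comm]
          exact Nat.mul_le_mul_right _ (leeWt_le_half p _)
    _ = #{j | ¬ (p : ZMod (p ^ s)) ∣ a j} * (p / 2) * p ^ (s - 1) := by
        rw [Finset.sum_ite, sum_const_zero, sum_const, smul_eq_mul, zero_add, mul_assoc]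

end Socle

lemma smul_row_mem_freeCode {p s K t : ℕ} (A : Matrix (Fin K) (Fin t) (ZMod (p ^ s)))
    (i : Fin K) (a : ZMod (p ^ s)) :
    a • Sum.elim (Pi.single i 1) (A i) ∈ freeCode p s K t A := by
  refine ⟨Pi.single i a, funext ?_⟩
  rintro (i' | j)
  · rcases eq_or_ne i' i with rfl | h <;> simp [*]
  · simp [Pi.single_apply]

theorem socle_codeword_bound_general (p s n K m : ℕ) (hp : p.Prime) (hs : 0 < s)
    (A : Matrix (Fin K) (Fin (n - K)) (ZMod (p ^ s)))
    (hrow : ∃ i : Fin K,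
      (Finset.univ.filter
        (fun j : Fin (n - K) => ∃ y : ZMod (p ^ s), A i j = (p : ZMod (p ^ s)) * y)).card = m) :
    (∃ c ∈ freeCode p s K (n - K) A, c ≠ 0 ∧
      (∀ j, ∃ y : ZMod (p ^ s), c j = (p : ZMod (p ^ s)) ^ (s - 1) * y) ∧
      leeWtF (p ^ s) c ≤ p ^ (s - 1) + (n - K - m) * (p / 2) * p ^ (s - 1)) ∧
    sInf {w : ℕ | ∃ c ∈ freeCode p s K (n - K) A, c ≠ 0 ∧ w = leeWtF (p ^ s) c} ≤
      p ^ (s - 1) + (n - K - m) * (p / 2) * p ^ (s - 1) := by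
  obtain ⟨i, hi⟩ := hrow
  set q : ZMod (p ^ s) := (p : ZMod (p ^ s)) ^ (s - 1)
  set c := q • Sum.elim (Pi.single i 1) (A i)
  have hmem : c ∈ freeCode p s K (n - K) A := smul_row_mem_freeCode A i q
  have hne : c ≠ 0 := fun h =>
    pow_pred_ne_zero hp.one_lt hs (by simpa [c] using congrFun h (Sum.inl i))
  have hcard : #{j | ¬ (p : ZMod (p ^ s)) ∣ A i j} = n - K - m := by
    have h := card_filter_add_card_filter_not (s := univ) fun j => (p : ZMod (p ^ s)) ∣ A i j
    rw [card_univ, Fintype.card_fin, show #{j | (p : ZMod (p ^ s)) ∣ A i j} = m from hi] at h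
    omega
  have hsplit : c = Sum.elim (Pi.single i q) (fun j => q * A i j) := by
    funext x
    rcases x with i' | j <;> simp [c, Pi.single_apply]
  have hwt : leeWtF (p ^ s) c ≤ p ^ (s - 1) + (n - K - m) * (p / 2) * p ^ (s - 1) := by
    rw [hsplit, leeWtF_sum_elim, leeWtF_single, leeWt_pow_pred hp.one_lt hs, ← hcard]
    exact Nat.add_le_add_left (sum_leeWt_pow_pred_mul_le hp.one_lt hs (A i)) _
  have hsocle : ∀ j, ∃ y : ZMod (p ^ s), c j = (p : ZMod (p ^ s)) ^ (s - 1) * y :=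
    fun j => ⟨_, rfl⟩
  refine ⟨⟨c, hmem, hne, hsocle, hwt⟩, le_trans (Nat.sInf_le ?_) hwt⟩
  exact ⟨c, hmem, hne, rfl⟩

theorem socle_codeword_bound (p s n K m : ℕ) (hp : p.Prime) (hs : 0 < s)
    (hK : 0 < K) (hKn : K ≤ n) (A : Matrix (Fin K) (Fin (n - K)) (ZMod (p ^ s)))
    (hrow : ∃ i : Fin K,
      (Finset.univ.filter
        (fun j : Fin (n - K) => ∃ y : ZMod (p ^ s), A i j = (p : ZMod (p ^ s)) * y)).card = m) :
    (∃ c ∈ freeCode p s K (n - K) A, c ≠ 0 ∧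
      (∀ j, ∃ y : ZMod (p ^ s), c j = (p : ZMod (p ^ s)) ^ (s - 1) * y) ∧
      leeWtF (p ^ s) c ≤ p ^ (s - 1) + (n - K - m) * (p / 2) * p ^ (s - 1)) ∧
    sInf {w : ℕ | ∃ c ∈ freeCode p s K (n - K) A, c ≠ 0 ∧ w = leeWtF (p ^ s) c} ≤
      p ^ (s - 1) + (n - K - m) * (p / 2) * p ^ (s - 1) :=
  socle_codeword_bound_general p s n K m hp hs A hrow
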